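/- Let K be a field, λ ∈ K, A = [[λ,1],[0,λ]], and B = A. Then the image of the map (X,Y) ↦ AXY - BYX on M(2,K) equals the set {A·M : M ∈ M(2,K), tr(M) = 0}, and in particular is a K-vector subspace of M(2,K). -/
import Mathlib

lemma comm_of_trace_zero {K : Type*} [Field K] (M : Matrix (Fin 2) (Fin 2) K)
    (h : M.trace = 0) : ∃ X Y : Matrix (Fin 2) (Fin 2) K, M = X * Y - Y * X := by
  rw [Matrix.trace_fin_two] at h
  have h11 : M 1 1 = -(M 0 0) := by linear_combination h
  by_cases hb : M 0 1 = 0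
  · refine ⟨!![0,0;1,0], !![M 1 0, -(M 0 0); 0, 0], ?_⟩
    ext i j
    fin_cases i <;> fin_cases j <;>
      simp [Matrix.mul_apply, Fin.sum_univ_two, hb, h11]
  · refine ⟨!![0,1; -(M 1 0)/(M 0 1), 0], !![0,0; M 0 0, M 0 1], ?_⟩
    ext i j
    fin_cases i <;> fin_cases j <;>
      simp [Matrix.mul_apply, Fin.sum_univ_two, h11] <;>
      field_simp

theorem stmt12 (K : Type*) [Field K] (l : K) :
    ({C : Matrix (Fin 2) (Fin 2) K | ∃ X Y : Matrix (Fin 2) (Fin 2) K,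
        C = !![l, 1; 0, l] * X * Y - !![l, 1; 0, l] * Y * X}
      = {C : Matrix (Fin 2) (Fin 2) K | ∃ M : Matrix (Fin 2) (Fin 2) K,
          M.trace = 0 ∧ C = !![l, 1; 0, l] * M}) ∧
    ∃ V : Submodule K (Matrix (Fin 2) (Fin 2) K),
      (V : Set (Matrix (Fin 2) (Fin 2) K))
        = {C : Matrix (Fin 2) (Fin 2) K | ∃ X Y : Matrix (Fin 2) (Fin 2) K,
            C = !![l, 1; 0, l] * X * Y - !![l, 1; 0, l] * Y * X} := by
  have hset : ({C : Matrix (Fin 2) (Fin 2) K | ∃ X Y : Matrix (Fin 2) (Fin 2) K,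
        C = !![l, 1; 0, l] * X * Y - !![l, 1; 0, l] * Y * X}
      = {C : Matrix (Fin 2) (Fin 2) K | ∃ M : Matrix (Fin 2) (Fin 2) K,
          M.trace = 0 ∧ C = !![l, 1; 0, l] * M}) := by
    ext C
    constructor
    · rintro ⟨X, Y, rfl⟩
      refine ⟨X * Y - Y * X, ?_, by rw [mul_sub, mul_assoc, mul_assoc]⟩
      rw [Matrix.trace_sub, Matrix.trace_mul_comm, sub_self]
    · rintro ⟨M, hM, rfl⟩
      obtain ⟨X, Y, rfl⟩ := comm_of_trace_zero M hM
      exact ⟨X, Y, by rw [mul_sub, mul_assoc, mul_assoc]⟩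
  refine ⟨hset, ⟨(LinearMap.ker (Matrix.traceLinearMap (Fin 2) K K)).map
      (LinearMap.mulLeft K !![l, 1; 0, l]), ?_⟩⟩
  rw [hset]
  ext C
  simp only [Submodule.map_coe, Set.mem_image, SetLike.mem_coe, LinearMap.mem_ker,
    Set.mem_setOf_eq, LinearMap.mulLeft_apply, Matrix.traceLinearMap_apply]
  constructor
  · rintro ⟨M, hM, rfl⟩; exact ⟨M, hM, rfl⟩
  · rintro ⟨M, hM, rfl⟩; exact ⟨M, hM, rfl⟩
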